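/- Every 2 × 2 complex unitary matrix U can be decomposed as U = D₁ · B(θ) · D₂, where θ, α, β, γ, δ are real numbers, D₁ = diag(e^{iα}, e^{iβ}) and D₂ = diag(e^{iγ}, e^{iδ}) are diagonal matrices of unit-modulus phases, and B(θ) = [[cos θ, i·sin θ], [i·sin θ, cos θ]] is the beam splitter matrix. -/

import Mathlib

/-!
A unitary `U = [[a, b], [c, d]]` satisfies `adj U = det U • U*`, so with `u = det U` (of modulus
one) we get `c = -u b̄` and `d = u ā`; moreover `|a|² + |b|² = 1`. Take `θ` with
`cos θ = |a|`, `sin θ = |b|` and read the phases of `D₁` and `D₂` off `arg a`, `arg b` and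
`arg u`; the factor `i` on the off-diagonal of `B(θ)` is absorbed by a phase `π / 2`.
-/

open Matrix

/-- The beam splitter matrix `B(θ) = [[cos θ, i sin θ], [i sin θ, cos θ]]`. -/
noncomputable def beamSplitter (θ : ℝ) : Matrix (Fin 2) (Fin 2) ℂ :=
  !![(Real.cos θ : ℂ), Complex.I * Real.sin θ;
     Complex.I * Real.sin θ, (Real.cos θ : ℂ)]

namespace Matrix

theorem adjugate_eq_det_smul_star_of_mem_unitaryGroup {n α : Type*} [Fintype n] [DecidableEq n]
    [CommRing α] [StarRing α] {U : Matrix n n α} (hU : U ∈ unitaryGroup n α) :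
    adjugate U = U.det • star U :=
  calc adjugate U = adjugate U * (U * star U) := by
        rw [mem_unitaryGroup_iff.mp hU, Matrix.mul_one]
    _ = U.det • star U := by
        rw [← Matrix.mul_assoc, adjugate_mul, Matrix.smul_mul, Matrix.one_mul]

theorem eq_of_mem_unitaryGroup_fin_two {α : Type*} [CommRing α] [StarRing α]
    {U : Matrix (Fin 2) (Fin 2) α} (hU : U ∈ unitaryGroup (Fin 2) α) :
    U = !![U 0 0, U 0 1; -(U.det * star (U 0 1)), U.det * star (U 0 0)] := by
  have h := adjugate_eq_det_smul_star_of_mem_unitaryGroup hU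
  rw [adjugate_fin_two] at h
  have h₁₀ : -U 1 0 = U.det * star (U 0 1) := by simpa using congr_fun₂ h 1 0
  have h₁₁ : U 1 1 = U.det * star (U 0 0) := by simpa using congr_fun₂ h 0 0
  rw [← h₁₀, neg_neg, ← h₁₁]
  exact eta_fin_two U

theorem sum_norm_sq_eq_one_of_mem_unitaryGroup {n 𝕜 : Type*} [Fintype n] [DecidableEq n]
    [RCLike 𝕜] {U : Matrix n n 𝕜} (hU : U ∈ unitaryGroup n 𝕜) (i : n) :
    ∑ j, ‖U i j‖ ^ 2 = 1 := by
  have h := congr_fun₂ (mem_unitaryGroup_iff.mp hU) i i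
  simp only [mul_apply, star_apply, RCLike.star_def, RCLike.mul_conj, one_apply_eq] at h
  exact_mod_cast h

end Matrix

theorem Real.exists_cos_eq_sin_eq {x y : ℝ} (hy : 0 ≤ y) (h : x ^ 2 + y ^ 2 = 1) :
    ∃ θ : ℝ, Real.cos θ = x ∧ Real.sin θ = y := by
  have hx : |x| ≤ 1 := (sq_le_one_iff_abs_le_one x).mp (by nlinarith)
  refine ⟨Real.arccos x, Real.cos_arccos (neg_le_of_abs_le hx) (le_of_abs_le hx), ?_⟩
  rw [Real.sin_arccos, ← h, add_sub_cancel_left, Real.sqrt_sq hy]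

theorem Complex.star_eq_norm_mul_exp_neg_arg (z : ℂ) :
    star z = ‖z‖ * Complex.exp (-(Complex.I * z.arg)) := by
  conv_lhs => rw [← Complex.norm_mul_exp_arg_mul_I z]
  simp [← Complex.exp_conj, mul_comm]

theorem diagonal_mul_beamSplitter_mul_diagonal (θ α β γ δ : ℝ) :
    diagonal ![Complex.exp (Complex.I * α), Complex.exp (Complex.I * β)] * beamSplitter θ
        * diagonal ![Complex.exp (Complex.I * γ), Complex.exp (Complex.I * δ)] =
      !![Complex.exp (Complex.I * (α + γ : ℝ)) * Real.cos θ,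
          Complex.I * Complex.exp (Complex.I * (α + δ : ℝ)) * Real.sin θ;
        Complex.I * Complex.exp (Complex.I * (β + γ : ℝ)) * Real.sin θ,
          Complex.exp (Complex.I * (β + δ : ℝ)) * Real.cos θ] := by
  simp only [diagonal_fin_two, beamSplitter, mul_fin_two, cons_val_zero, cons_val_one,
    cons_val_fin_one, mul_zero, zero_mul, add_zero, zero_add, Complex.ofReal_add, mul_add,
    Complex.exp_add]
  rw [EmbeddingLike.apply_eq_iff_eq]
  simp only [vecCons_inj, and_true]
  refine ⟨⟨?_, ?_⟩, ?_, ?_⟩ <;> ring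

theorem fin_two_eq_diagonal_mul_beamSplitter_mul_diagonal {a b : ℂ} {θ : ℝ} (φ : ℝ)
    (hcos : Real.cos θ = ‖a‖) (hsin : Real.sin θ = ‖b‖) :
    !![a, b; -(Complex.exp (Complex.I * φ) * star b), Complex.exp (Complex.I * φ) * star a] =
      diagonal ![Complex.exp (Complex.I * a.arg),
          Complex.exp (Complex.I * (φ - b.arg + Real.pi / 2 : ℝ))] * beamSplitter θ
        * diagonal ![Complex.exp (Complex.I * (0 : ℝ)),
          Complex.exp (Complex.I * (b.arg - Real.pi / 2 - a.arg : ℝ))] := by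
  have hI : Complex.exp (Complex.I * (Real.pi / 2 : ℝ)) = Complex.I := by
    rw [mul_comm]; push_cast; exact Complex.exp_pi_div_two_mul_I
  have ha : ‖a‖ * Complex.exp (Complex.I * a.arg) = a := by
    rw [mul_comm Complex.I]; exact Complex.norm_mul_exp_arg_mul_I a
  have hb : ‖b‖ * Complex.exp (Complex.I * b.arg) = b := by
    rw [mul_comm Complex.I]; exact Complex.norm_mul_exp_arg_mul_I b
  rw [diagonal_mul_beamSplitter_mul_diagonal, add_zero, add_zero, add_sub_cancel,
    show φ - b.arg + Real.pi / 2 + (b.arg - Real.pi / 2 - a.arg) = φ - a.arg by ring]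
  simp only [hcos, hsin, Complex.star_eq_norm_mul_exp_neg_arg, Complex.ofReal_sub,
    Complex.ofReal_add, mul_add, mul_sub, Complex.exp_add, Complex.exp_sub, hI, Complex.exp_neg]
  rw [EmbeddingLike.apply_eq_iff_eq]
  simp only [vecCons_inj, and_true]
  refine ⟨⟨?_, ?_⟩, ?_, ?_⟩ <;> field_simp
  · linear_combination -ha
  · linear_combination -hb
  · linear_combination (-‖b‖ : ℂ) * Complex.I_mul_I

/-- every `2 × 2` complex unitary `U` decomposes as
`U = diag(e^{iα}, e^{iβ}) · B(θ) · diag(e^{iγ}, e^{iδ})` for real `θ, α, β, γ, δ`. -/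
theorem unitary2_decomposition (U : Matrix (Fin 2) (Fin 2) ℂ)
    (hU : U ∈ Matrix.unitaryGroup (Fin 2) ℂ) :
    ∃ θ α β γ δ : ℝ,
      U = Matrix.diagonal ![Complex.exp (Complex.I * α), Complex.exp (Complex.I * β)]
            * beamSplitter θ
            * Matrix.diagonal ![Complex.exp (Complex.I * γ), Complex.exp (Complex.I * δ)] := by
  obtain ⟨φ, hφ⟩ : ∃ φ : ℝ, Complex.exp (Complex.I * φ) = U.det := by
    obtain ⟨φ, hφ⟩ := (Complex.norm_eq_one_iff _).mp
      (CStarRing.norm_of_mem_unitary (det_of_mem_unitary hU))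
    exact ⟨φ, by rw [mul_comm, hφ]⟩
  obtain ⟨θ, hcos, hsin⟩ := Real.exists_cos_eq_sin_eq (norm_nonneg _)
    ((Fin.sum_univ_two _).symm.trans (sum_norm_sq_eq_one_of_mem_unitaryGroup hU 0))
  refine ⟨θ, (U 0 0).arg, φ - (U 0 1).arg + Real.pi / 2, 0,
    (U 0 1).arg - Real.pi / 2 - (U 0 0).arg, ?_⟩
  conv_lhs => rw [eq_of_mem_unitaryGroup_fin_two hU, ← hφ]
  exact fin_two_eq_diagonal_mul_beamSplitter_mul_diagonal φ hcos hsin
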